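/- Let g be a natural number with g ≥ 1 and q > 0 a real number. Let δ_1, …, δ_g be nonnegative reals and ℓ_1, …, ℓ_g positive reals. Define b_0 = 0 and b_k = b_{k−1} + (q/g)·δ_k for 1 ≤ k ≤ g, and assume b_g ≤ 1. Define Y : ℝ → ℝ by Y(x) = g/(q·ℓ_k) if x ∈ (b_{k−1}, b_k] for some 1 ≤ k ≤ g, and Y(x) = 1/(2q) otherwise. Define T : ℝ → ℝ by T(z) = g/⌈g/z⌉ if z ≥ 1 and T(z) = 0 if z < 1, where ⌈·⌉ denotes the ceiling. Then for X uniformly distributed on (0,1], the expectation satisfies E[T(q·Y(X))] = Σ_{k : ℓ_k ≤ g} q·δ_k/⌈ℓ_k⌉. -/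

import Mathlib

open MeasureTheory Finset

/-!
On the `k`-th interval `(b (k-1), b k]` we have `q * Y = g / ℓ k`, so the truncation takes the
value `g / ⌈ℓ k⌉` if `ℓ k ≤ g` and `0` otherwise; off these intervals `q * Y = 1 / 2 < 1` and the
truncation vanishes. Since `b` is monotone the intervals are disjoint subintervals of `(0, 1]`, of
lengths `(q / g) * δ k`, so the integral is a finite sum of lengths times values.
-/

section StepFunction

variable {α : Type*} [Preorder α] {f : ℕ → α} {n : ℕ}

theorem monotoneOn_Iic_of_forall_sub_one_le (hf : ∀ k ∈ Icc 1 n, f (k - 1) ≤ f k) :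
    MonotoneOn f (Set.Iic n) := by
  intro i _ j hj hij
  induction j, hij using Nat.le_induction with
  | base => exact le_rfl
  | succ m _ ih =>
    have hm : m + 1 ≤ n := hj
    exact (ih (Set.mem_Iic.mpr (by omega))).trans
      (by simpa using hf (m + 1) (mem_Icc.mpr ⟨by omega, hm⟩))

theorem pairwiseDisjoint_Ioc_sub_one (hf : MonotoneOn f (Set.Iic n)) :
    (Icc 1 n : Set ℕ).PairwiseDisjoint fun k => Set.Ioc (f (k - 1)) (f k) := by
  have key : ∀ j ∈ Icc 1 n, ∀ k ∈ Icc 1 n, j < k →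
      Disjoint (Set.Ioc (f (j - 1)) (f j)) (Set.Ioc (f (k - 1)) (f k)) := by
    intro j hj k hk hjk
    rw [mem_Icc] at hj hk
    have hfjk : f j ≤ f (k - 1) :=
      hf (Set.mem_Iic.mpr hj.2) (Set.mem_Iic.mpr (by omega)) (by omega)
    exact Set.disjoint_left.mpr fun x hxj hxk => (hxj.2.trans hfjk).not_gt hxk.1
  intro j hj k hk hjk
  rcases lt_or_gt_of_ne hjk with hlt | hgt
  · exact key j hj k hk hlt
  · exact (key k hk j hj hgt).symm

theorem eq_sum_indicator_Ioc {M : Type*} [AddCommMonoid M] (hf : MonotoneOn f (Set.Iic n))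
    {F : α → M} {c : ℕ → M}
    (h_on : ∀ k ∈ Icc 1 n, ∀ x ∈ Set.Ioc (f (k - 1)) (f k), F x = c k)
    (h_off : ∀ x, (∀ k ∈ Icc 1 n, x ∉ Set.Ioc (f (k - 1)) (f k)) → F x = 0) :
    F = fun x => ∑ k ∈ Icc 1 n, (Set.Ioc (f (k - 1)) (f k)).indicator (fun _ => c k) x := by
  funext x
  by_cases hx : ∃ k ∈ Icc 1 n, x ∈ Set.Ioc (f (k - 1)) (f k)
  · obtain ⟨k, hk, hxk⟩ := hx
    rw [h_on k hk x hxk, sum_eq_single_of_mem k hk, Set.indicator_of_mem hxk]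
    intro j hj hjk
    exact Set.indicator_of_notMem
      (Set.disjoint_right.mp (pairwiseDisjoint_Ioc_sub_one hf hj hk hjk) hxk) _
  · push Not at hx
    rw [h_off x hx]
    exact (sum_eq_zero fun k hk => Set.indicator_of_notMem (hx k hk) _).symm

end StepFunction

theorem setIntegral_Ioc_eq_sum_of_step {f : ℕ → ℝ} {n : ℕ} {a a' : ℝ}
    (hf : MonotoneOn f (Set.Iic n)) (ha : a ≤ f 0) (ha' : f n ≤ a')
    {F : ℝ → ℝ} {c : ℕ → ℝ}
    (h_on : ∀ k ∈ Icc 1 n, ∀ x ∈ Set.Ioc (f (k - 1)) (f k), F x = c k)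
    (h_off : ∀ x, (∀ k ∈ Icc 1 n, x ∉ Set.Ioc (f (k - 1)) (f k)) → F x = 0) :
    ∫ x in Set.Ioc a a', F x = ∑ k ∈ Icc 1 n, (f k - f (k - 1)) * c k := by
  rw [eq_sum_indicator_Ioc hf h_on h_off, integral_finsetSum]
  · refine sum_congr rfl fun k hk => ?_
    have hk' := mem_Icc.mp hk
    have hk_mem : k ∈ Set.Iic n := hk'.2
    have hk1_mem : k - 1 ∈ Set.Iic n := Set.mem_Iic.mpr (by omega)
    have hsub : Set.Ioc (f (k - 1)) (f k) ⊆ Set.Ioc a a' :=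
      Set.Ioc_subset_Ioc (ha.trans (hf (Set.mem_Iic.mpr n.zero_le) hk1_mem (k - 1).zero_le))
        ((hf hk_mem (Set.mem_Iic.mpr le_rfl) hk'.2).trans ha')
    rw [setIntegral_indicator measurableSet_Ioc, Set.inter_eq_self_of_subset_right hsub,
      setIntegral_const, Real.volume_real_Ioc_of_le (hf hk1_mem hk_mem (k.sub_le 1)), smul_eq_mul]
  · intro k _
    exact ((integrable_indicator_iff measurableSet_Ioc).mpr
      (integrableOn_const measure_Ioc_lt_top.ne)).integrableOn

noncomputable def ebhTruncation (g : ℕ) (z : ℝ) : ℝ :=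
  if 1 ≤ z then (g : ℝ) / ((⌈(g : ℝ) / z⌉ : ℤ) : ℝ) else 0

theorem ebhTruncation_of_lt_one {g : ℕ} {z : ℝ} (hz : z < 1) : ebhTruncation g z = 0 :=
  if_neg hz.not_ge

theorem ebhTruncation_div {g : ℕ} {ℓ : ℝ} (hℓ : 0 < ℓ) :
    ebhTruncation g (g / ℓ) = if ℓ ≤ g then (g : ℝ) / ((⌈ℓ⌉ : ℤ) : ℝ) else 0 := by
  simp only [ebhTruncation, le_div_iff₀ hℓ, one_mul]
  split_ifs with hle
  · rw [div_div_cancel₀ (hℓ.trans_le hle).ne']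
  · rfl

theorem stmt_11_general (g : ℕ) (q : ℝ) (hq : 0 < q)
    (δ ℓ : ℕ → ℝ)
    (hδ : ∀ k ∈ Finset.Icc 1 g, 0 ≤ δ k)
    (hℓ : ∀ k ∈ Finset.Icc 1 g, 0 < ℓ k)
    (b : ℕ → ℝ) (hb0 : b 0 = 0)
    (hb : ∀ k ∈ Finset.Icc 1 g, b k = b (k - 1) + (q / g) * δ k)
    (hbg : b g ≤ 1)
    (Y : ℝ → ℝ)
    (hY1 : ∀ k ∈ Finset.Icc 1 g, ∀ x ∈ Set.Ioc (b (k - 1)) (b k), Y x = g / (q * ℓ k))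
    (hY2 : ∀ x : ℝ, (∀ k ∈ Finset.Icc 1 g, x ∉ Set.Ioc (b (k - 1)) (b k)) →
      Y x = 1 / (2 * q))
    (T : ℝ → ℝ)
    (hT : ∀ z : ℝ, T z = if 1 ≤ z then (g : ℝ) / ((⌈(g : ℝ) / z⌉ : ℤ) : ℝ) else 0) :
    ∫ x in Set.Ioc (0 : ℝ) 1, T (q * Y x)
      = ∑ k ∈ (Finset.Icc 1 g).filter (fun k => ℓ k ≤ (g : ℝ)),
          q * δ k / ((⌈ℓ k⌉ : ℤ) : ℝ) := by
  obtain rfl : T = ebhTruncation g := funext hT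
  have hb_mono : MonotoneOn b (Set.Iic g) := monotoneOn_Iic_of_forall_sub_one_le fun k hk => by
    rw [hb k hk]
    exact le_add_of_nonneg_right (mul_nonneg (by positivity) (hδ k hk))
  rw [setIntegral_Ioc_eq_sum_of_step hb_mono hb0.ge hbg (c := fun k => ebhTruncation g (g / ℓ k)),
    sum_filter]
  · refine sum_congr rfl fun k hk => ?_
    rw [hb k hk, add_sub_cancel_left, ebhTruncation_div (hℓ k hk)]
    split_ifs with hle
    · have hg : (g : ℝ) ≠ 0 := ((hℓ k hk).trans_le hle).ne'
      field_simp
    · rw [mul_zero]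
  · intro k hk x hx
    rw [hY1 k hk x hx, ← mul_div_assoc, mul_div_mul_left _ _ hq.ne']
  · intro x hx
    rw [hY2 x hx, mul_one_div, div_mul_cancel_right₀ hq.ne']
    exact ebhTruncation_of_lt_one (by norm_num)

theorem stmt_11 (g : ℕ) (hg : 1 ≤ g) (q : ℝ) (hq : 0 < q)
    (δ ℓ : ℕ → ℝ)
    (hδ : ∀ k ∈ Finset.Icc 1 g, 0 ≤ δ k)
    (hℓ : ∀ k ∈ Finset.Icc 1 g, 0 < ℓ k)
    (b : ℕ → ℝ) (hb0 : b 0 = 0)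
    (hb : ∀ k ∈ Finset.Icc 1 g, b k = b (k - 1) + (q / g) * δ k)
    (hbg : b g ≤ 1)
    (Y : ℝ → ℝ)
    (hY1 : ∀ k ∈ Finset.Icc 1 g, ∀ x ∈ Set.Ioc (b (k - 1)) (b k), Y x = g / (q * ℓ k))
    (hY2 : ∀ x : ℝ, (∀ k ∈ Finset.Icc 1 g, x ∉ Set.Ioc (b (k - 1)) (b k)) →
      Y x = 1 / (2 * q))
    (T : ℝ → ℝ)
    (hT : ∀ z : ℝ, T z = if 1 ≤ z then (g : ℝ) / ((⌈(g : ℝ) / z⌉ : ℤ) : ℝ) else 0) :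
    ∫ x in Set.Ioc (0 : ℝ) 1, T (q * Y x)
      = ∑ k ∈ (Finset.Icc 1 g).filter (fun k => ℓ k ≤ (g : ℝ)),
          q * δ k / ((⌈ℓ k⌉ : ℤ) : ℝ) :=
  stmt_11_general g q hq δ ℓ hδ hℓ b hb0 hb hbg Y hY1 hY2 T hT
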